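/- Let A be a Banach algebra and D : A → A* a surjective bounded derivation such that the second adjoint D'' : A** → A*** is a derivation (with respect to the first Arens product). Then A*** A** ⊆ A*, and consequently A* has the weak*-weak convergence property with respect to A: for every x' ∈ A* and every net (a_α) in A converging weak* to a'' ∈ A**, the nets x' a_α and a_α x' converge weakly in A* to x' a'' and a'' x' respectively. -/

import Mathlib

namespace NormedSpace

/-- The topological dual of a normed space `E` (Mathlib's former `NormedSpace.Dual`). -/
abbrev Dual (𝕜 : Type*) [NontriviallyNormedField 𝕜] (E : Type*) [SeminormedAddCommGroup E]
    [NormedSpace 𝕜 E] : Type _ :=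
  E →L[𝕜] 𝕜

end NormedSpace

open ContinuousLinearMap NormedSpace Filter Topology Metric

noncomputable section

namespace Arens

section Bilinear

variable {X Y Z : Type*} [NormedAddCommGroup X] [NormedSpace ℂ X]
  [NormedAddCommGroup Y] [NormedSpace ℂ Y] [NormedAddCommGroup Z] [NormedSpace ℂ Z]

/-- The Arens adjoint `m*` of a bounded bilinear map `m : X × Y → Z`,
`⟨m*(z',x), y⟩ = ⟨z', m(x,y)⟩`. -/
def adj (f : X →L[ℂ] Y →L[ℂ] Z) : Dual ℂ Z →L[ℂ] X →L[ℂ] Dual ℂ Y :=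
  ((ContinuousLinearMap.compL ℂ X (Y →L[ℂ] Z) (Y →L[ℂ] ℂ)).flip f).comp
    (ContinuousLinearMap.compL ℂ Y Z ℂ)

@[simp] lemma adj_apply (f : X →L[ℂ] Y →L[ℂ] Z) (z' : Dual ℂ Z) (x : X) (y : Y) :
    adj f z' x y = z' (f x y) := rfl

/-- The Arens triple-adjoint extension `m*** : X** × Y** → Z**` of a bounded
bilinear map `m : X × Y → Z`. -/
def ext3 (f : X →L[ℂ] Y →L[ℂ] Z) :
    Dual ℂ (Dual ℂ X) →L[ℂ] Dual ℂ (Dual ℂ Y) →L[ℂ] Dual ℂ (Dual ℂ Z) :=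
  adj (adj (adj f))

/-- Weak-star convergence of a net `(a i)` of `X` (canonically embedded in `X**`)
to an element `F` of the bidual `X**`. -/
def WStarTendsto {ι : Type*} (a : ι → X) (l : Filter ι) (F : Dual ℂ (Dual ℂ X)) : Prop :=
  ∀ x' : Dual ℂ X, Tendsto (fun i => x' (a i)) l (𝓝 (F x'))

end Bilinear

section Algebra

variable (A : Type*) [NonUnitalNormedRing A] [NormedSpace ℂ A]
  [IsScalarTower ℂ A A] [SMulCommClass ℂ A A]

/-- The multiplication of a (non-unital) Banach algebra as a bounded bilinear map. -/
abbrev mulCLM : A →L[ℂ] A →L[ℂ] A := ContinuousLinearMap.mul ℂ A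

/-- The first Arens product on the bidual `A**`. -/
def fstArens (F G : Dual ℂ (Dual ℂ A)) : Dual ℂ (Dual ℂ A) := ext3 (mulCLM A) F G

/-- The second Arens product on the bidual `A**` (`m^{t***t}`). -/
def sndArens (F G : Dual ℂ (Dual ℂ A)) : Dual ℂ (Dual ℂ A) :=
  ext3 ((mulCLM A).flip) G F

/-- A Banach algebra is Arens regular when its two Arens products coincide. -/
def ArensRegular : Prop := ∀ F G : Dual ℂ (Dual ℂ A), fstArens A F G = sndArens A F G

end Algebra

section ModuleWC

universe u
variable {A : Type u} {B : Type*} [NonUnitalNormedRing A] [NormedSpace ℂ A]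
  [NormedAddCommGroup B] [NormedSpace ℂ B]

/-- For a left Banach `A`-module action `πl` on `B`, the element `b' a ∈ B*`,
`⟨b' a, b⟩ = ⟨b', a • b⟩`. -/
def dualSmulL (πl : A →L[ℂ] B →L[ℂ] B) (b' : Dual ℂ B) (a : A) : Dual ℂ B := adj πl b' a

/-- The Arens extension `b' a'' ∈ B***`, `⟨b'', b' a''⟩ = ⟨π_ℓ***(a'', b''), b'⟩`. -/
def dualSmulLStar (πl : A →L[ℂ] B →L[ℂ] B) (b' : Dual ℂ B) (F : Dual ℂ (Dual ℂ A)) :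
    Dual ℂ (Dual ℂ (Dual ℂ B)) :=
  (inclusionInDoubleDual ℂ (Dual ℂ B) b').comp (ext3 πl F)

/-- `b' ∈ B*` has the left-weak*-weak convergence property (`Lw*wc`) with respect to `A`:
for every net `(a_α) ⊆ A` with `a_α → a''` weak* in `A**`, the net `b' a_α` converges
weakly to `b' a''` in `B*`. -/
def LWStarWC (πl : A →L[ℂ] B →L[ℂ] B) (b' : Dual ℂ B) : Prop :=
  ∀ (ι : Type u) (l : Filter ι) (a : ι → A) (F : Dual ℂ (Dual ℂ A)),
    WStarTendsto a l F →
    ∀ b'' : Dual ℂ (Dual ℂ B),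
      Tendsto (fun i => b'' (dualSmulL πl b' (a i))) l (𝓝 (dualSmulLStar πl b' F b''))

/-- For a right Banach `A`-module action `πr` on `B`, the element `a b' ∈ B*`,
`⟨a b', b⟩ = ⟨b', b • a⟩`. -/
def dualSmulR (πr : B →L[ℂ] A →L[ℂ] B) (a : A) (b' : Dual ℂ B) : Dual ℂ B :=
  adj πr.flip b' a

/-- The Arens extension `a'' b' ∈ B***`, `⟨b'', a'' b'⟩ = ⟨π_r^{t***}(a'', b''), b'⟩`. -/
def dualSmulRStar (πr : B →L[ℂ] A →L[ℂ] B) (F : Dual ℂ (Dual ℂ A)) (b' : Dual ℂ B) :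
    Dual ℂ (Dual ℂ (Dual ℂ B)) :=
  (inclusionInDoubleDual ℂ (Dual ℂ B) b').comp (ext3 πr.flip F)

/-- `b' ∈ B*` has the right-weak*-weak convergence property (`Rw*wc`) with respect to `A`. -/
def RWStarWC (πr : B →L[ℂ] A →L[ℂ] B) (b' : Dual ℂ B) : Prop :=
  ∀ (ι : Type u) (l : Filter ι) (a : ι → A) (F : Dual ℂ (Dual ℂ A)),
    WStarTendsto a l F →
    ∀ b'' : Dual ℂ (Dual ℂ B),
      Tendsto (fun i => b'' (dualSmulR πr (a i) b')) l (𝓝 (dualSmulRStar πr F b' b''))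

end ModuleWC

section AlgebraWC

variable (A : Type u) [NonUnitalNormedRing A] [NormedSpace ℂ A]
  [IsScalarTower ℂ A A] [SMulCommClass ℂ A A]

/-- The product `a'' a' ∈ A*` (first step of the first Arens product):
`⟨a'' a', a⟩ = ⟨a'', a' a⟩` where `⟨a' a, b⟩ = ⟨a', a b⟩`. -/
def biSmul (F : Dual ℂ (Dual ℂ A)) (a' : Dual ℂ A) : Dual ℂ A :=
  F.comp (adj (mulCLM A) a')

/-- The element `a · a' ∈ A*`, `⟨a a', b⟩ = ⟨a', b a⟩`. -/
def leftMulDual (a : A) (a' : Dual ℂ A) : Dual ℂ A := a'.comp ((mulCLM A).flip a)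

/-- `A*` has the `Rw*wc`-property with respect to `A`: for every `a' ∈ A*` and every net
`(a_α) ⊆ A` with `a_α → a''` weak* in `A**`, the net `a_α a'` (`⟨a_α a', b⟩ = ⟨a', b a_α⟩`)
converges weakly in `A*` to `a'' a'`. -/
def RWStarWCDualProp : Prop :=
  ∀ (a' : Dual ℂ A) (ι : Type u) (l : Filter ι) (a : ι → A) (F : Dual ℂ (Dual ℂ A)),
    WStarTendsto a l F →
    ∀ x'' : Dual ℂ (Dual ℂ A),
      Tendsto (fun i => x'' (leftMulDual A (a i) a')) l (𝓝 (x'' (biSmul A F a')))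

/-- `A*` has the `Lw*wc`-property with respect to `A`. -/
def LWStarWCDualProp : Prop := ∀ a' : Dual ℂ A, LWStarWC (mulCLM A) a'

/-- `A**` has the `Lw*wc`-property with respect to `A`: for every `x'' ∈ A**` and every net
`(a_α) ⊆ A` with `a_α → a''` weak* in `A**`, the net `x'' a_α` converges weakly in `A**`
to `x'' a''`. -/
def LWStarWCBidualProp : Prop :=
  ∀ (x'' : Dual ℂ (Dual ℂ A)) (ι : Type u) (l : Filter ι) (a : ι → A) (F : Dual ℂ (Dual ℂ A)),
    WStarTendsto a l F →
    ∀ Φ : Dual ℂ (Dual ℂ (Dual ℂ A)),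
      Tendsto (fun i => Φ (fstArens A x'' (inclusionInDoubleDual ℂ A (a i)))) l
        (𝓝 (Φ (fstArens A x'' F)))

/-- `D : A → A*` is a derivation: `D(ab) = a·D(b) + D(a)·b`, where
`(a·f)(x) = f(x a)` and `(f·b)(x) = f(b x)`. -/
def IsDerivation (D : A →L[ℂ] Dual ℂ A) : Prop :=
  ∀ a b : A, D (a * b) = (D b).comp ((mulCLM A).flip a) + (D a).comp (mulCLM A b)

/-- `A` is weakly amenable: every bounded derivation `D : A → A*` is inner. -/
def WeaklyAmenable : Prop :=
  ∀ D : A →L[ℂ] Dual ℂ A, IsDerivation A D →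
    ∃ f : Dual ℂ A, ∀ a : A, D a = f.comp ((mulCLM A).flip a) - f.comp (mulCLM A a)

/-- The left action of `A**` (with the first Arens product) on `A***`:
`(F·Φ)(G) = Φ(G F)`. -/
def ddLeftAct (F : Dual ℂ (Dual ℂ A)) (Φ : Dual ℂ (Dual ℂ (Dual ℂ A))) :
    Dual ℂ (Dual ℂ (Dual ℂ A)) :=
  Φ.comp ((ext3 (mulCLM A)).flip F)

/-- The right action of `A**` (with the first Arens product) on `A***`:
`(Φ·F)(G) = Φ(F G)`. -/
def ddRightAct (F : Dual ℂ (Dual ℂ A)) (Φ : Dual ℂ (Dual ℂ (Dual ℂ A))) :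
    Dual ℂ (Dual ℂ (Dual ℂ A)) :=
  Φ.comp (ext3 (mulCLM A) F)

/-- A bounded map `D : A** → A***` is a derivation for the first Arens product. -/
def IsDerivationDD (D : Dual ℂ (Dual ℂ A) →L[ℂ] Dual ℂ (Dual ℂ (Dual ℂ A))) : Prop :=
  ∀ F G : Dual ℂ (Dual ℂ A),
    D (fstArens A F G) = ddLeftAct A F (D G) + ddRightAct A G (D F)

/-- `A**` (with the first Arens product) is weakly amenable. -/
def WeaklyAmenableDD : Prop :=
  ∀ D : Dual ℂ (Dual ℂ A) →L[ℂ] Dual ℂ (Dual ℂ (Dual ℂ A)), IsDerivationDD A D →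
    ∃ Φ : Dual ℂ (Dual ℂ (Dual ℂ A)), ∀ F, D F = ddLeftAct A F Φ - ddRightAct A F Φ

/-- `A*** A** ⊆ A*`: each product `x''' x''` (`⟨x''' x'', a''⟩ = ⟨x''', x'' a''⟩`)
lies in the canonical image of `A*` in `A***`. -/
def TripleDualMulIntoDual : Prop :=
  ∀ (Φ : Dual ℂ (Dual ℂ (Dual ℂ A))) (F : Dual ℂ (Dual ℂ A)),
    ∃ a' : Dual ℂ A, ddRightAct A F Φ = inclusionInDoubleDual ℂ (Dual ℂ A) a'

end AlgebraWC

section DualMap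

variable {X Y : Type*} [NormedAddCommGroup X] [NormedSpace ℂ X]
  [NormedAddCommGroup Y] [NormedSpace ℂ Y]

/-- The Banach-space adjoint of a bounded operator. -/
def dualMap' (T : X →L[ℂ] Y) : Dual ℂ Y →L[ℂ] Dual ℂ X :=
  (ContinuousLinearMap.compL ℂ X Y ℂ).flip T

/-- The second adjoint `D'' : A** → A***` of `D : A → A*`. -/
def secondAdjoint {A : Type*} [NonUnitalNormedRing A] [NormedSpace ℂ A]
    (D : A →L[ℂ] Dual ℂ A) :
    Dual ℂ (Dual ℂ A) →L[ℂ] Dual ℂ (Dual ℂ (Dual ℂ A)) :=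
  dualMap' (dualMap' D)

end DualMap

section Biregular

variable (A B : Type*) [NonUnitalNormedRing A] [NormedSpace ℂ A]
  [NonUnitalNormedRing B] [NormedSpace ℂ B]

/-- A bounded bilinear form `m : A × B → ℂ` is biregular (Ülger): for any sequences
`(a_i), (aa2_j)` in the unit ball of `A` and `(b_i), (bb_j)` in the unit ball of `B`,
the two iterated limits of `m(a_i aa2_j, b_i bb_j)` coincide whenever both exist. -/
def Biregular (m : A →L[ℂ] B →L[ℂ] ℂ) : Prop :=
  ∀ (a aa2 : ℕ → A) (b bb : ℕ → B),
    (∀ i, ‖a i‖ ≤ 1) → (∀ j, ‖aa2 j‖ ≤ 1) → (∀ i, ‖b i‖ ≤ 1) → (∀ j, ‖bb j‖ ≤ 1) →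
    ∀ (g h : ℕ → ℂ) (L L' : ℂ),
      (∀ i, Tendsto (fun j => m (a i * aa2 j) (b i * bb j)) atTop (𝓝 (g i))) →
      Tendsto g atTop (𝓝 L) →
      (∀ j, Tendsto (fun i => m (a i * aa2 j) (b i * bb j)) atTop (𝓝 (h j))) →
      Tendsto h atTop (𝓝 L') → L = L'

/-- Arens regularity of the projective tensor product `A ⊗̂ B`.  By Ülger's theorem
(`[22, Theorem 3.4]`), `A ⊗̂ B` is Arens regular if and only if every bounded bilinear
form `m : A × B → ℂ` is biregular; since the dual of `A ⊗̂ B` is exactly the space of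
bounded bilinear forms on `A × B`, we take this equivalent characterization as the
formalization of Arens regularity of `A ⊗̂ B`. -/
def ProjArensRegular : Prop := ∀ m : A →L[ℂ] B →L[ℂ] ℂ, Biregular A B m

end Biregular

end Arens

/-!
Since `D` is onto, so is `D''`, and every `Φ ∈ A***` is `D''(P)` for some `P ∈ A**`. Evaluating
the derivation identity `D''(G □ P) = G · D''(P) + D''(G) · P` at `F ∈ A**` shows that `Φ · F`
is the canonical image of `P · D'(F) - D'(P □ F) ∈ A*`. Right weak*-weak convergence follows,
because `⟨x'', a_α a'⟩ = ⟨a' · x'', a_α⟩` with `a' · x'' ∈ A*`; the left one is formal.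
-/

namespace Arens

section DualMapSurjective

variable {X Y : Type*} [NormedAddCommGroup X] [NormedSpace ℂ X]
  [NormedAddCommGroup Y] [NormedSpace ℂ Y]

lemma antilipschitz_dualMap'_of_surjective [CompleteSpace X] [CompleteSpace Y] (T : X →L[ℂ] Y)
    (hT : Function.Surjective T) : ∃ K, AntilipschitzWith K (dualMap' T) := by
  obtain ⟨C, hC0, hC⟩ := T.exists_preimage_norm_le hT
  refine ⟨⟨C, hC0.le⟩, (dualMap' T).antilipschitz_of_bound fun g ↦ ?_⟩
  refine g.opNorm_le_bound (by positivity) fun y ↦ ?_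
  obtain ⟨x, rfl, hx⟩ := hC y
  calc ‖g (T x)‖ = ‖dualMap' T g x‖ := rfl
    _ ≤ ‖dualMap' T g‖ * (C * ‖T x‖) := (dualMap' T g).le_of_opNorm_le_of_le le_rfl hx
    _ = C * ‖dualMap' T g‖ * ‖T x‖ := by ring

/-- `φ` is the pull-back of a Hahn–Banach extension of `φ ∘ S⁻¹` from the closed range of `S`. -/
lemma dualMap'_surjective_of_antilipschitz [CompleteSpace X] [CompleteSpace Y] {S : X →L[ℂ] Y}
    {K : NNReal} (hS : AntilipschitzWith K S) : Function.Surjective (dualMap' S) := by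
  intro φ
  let e := S.equivRange hS.injective (hS.isClosed_range S.uniformContinuous)
  obtain ⟨g, hg, -⟩ := exists_extension_norm_eq S.range (φ.comp (e.symm : S.range →L[ℂ] X))
  refine ⟨g, ContinuousLinearMap.ext fun x ↦ ?_⟩
  calc g (S x) = φ (e.symm ⟨S x, LinearMap.mem_range_self _ x⟩) := hg ⟨S x, _⟩
    _ = φ x := congrArg φ (S.equivRange_symm_apply _ _ x)

end DualMapSurjective

lemma secondAdjoint_surjective {A : Type*} [NonUnitalNormedRing A] [NormedSpace ℂ A]
    [CompleteSpace A] {D : A →L[ℂ] Dual ℂ A} (hD : Function.Surjective D) :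
    Function.Surjective (secondAdjoint D) :=
  have ⟨_, hK⟩ := antilipschitz_dualMap'_of_surjective D hD
  dualMap'_surjective_of_antilipschitz hK

variable {A : Type*} [NonUnitalNormedRing A] [NormedSpace ℂ A]
  [IsScalarTower ℂ A A] [SMulCommClass ℂ A A]

lemma ddRightAct_secondAdjoint {D : A →L[ℂ] Dual ℂ A}
    (hD : IsDerivationDD A (secondAdjoint D)) (P F : Dual ℂ (Dual ℂ A)) :
    ddRightAct A F (secondAdjoint D P) = inclusionInDoubleDual ℂ (Dual ℂ A)
      (biSmul A P (dualMap' D F) - dualMap' D (fstArens A P F)) := by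
  ext G
  have h := congrArg (fun Φ ↦ Φ F) (hD G P)
  change G (biSmul A P (dualMap' D F))
    = P (dualMap' D (fstArens A F G)) + G (dualMap' D (fstArens A P F)) at h
  change P (dualMap' D (fstArens A F G))
    = G (biSmul A P (dualMap' D F) - dualMap' D (fstArens A P F))
  rw [map_sub, h, add_sub_cancel_right]

lemma tripleDualMulIntoDual_of_isDerivationDD [CompleteSpace A] {D : A →L[ℂ] Dual ℂ A}
    (hsurj : Function.Surjective D) (hD : IsDerivationDD A (secondAdjoint D)) :
    TripleDualMulIntoDual A := by
  intro Φ F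
  obtain ⟨P, rfl⟩ := secondAdjoint_surjective hsurj Φ
  exact ⟨_, ddRightAct_secondAdjoint hD P F⟩

lemma lWStarWCDualProp : LWStarWCDualProp A :=
  fun a' _ _ _ _ hF b'' ↦ hF (b''.comp (adj (mulCLM A) a'))

lemma leftMulDual_eq_biSmul (a : A) (a' : Dual ℂ A) :
    leftMulDual A a a' = biSmul A (inclusionInDoubleDual ℂ A a) a' :=
  rfl

lemma rWStarWCDualProp_of_tripleDualMulIntoDual (h : TripleDualMulIntoDual A) :
    RWStarWCDualProp A := by
  intro a' _ l a F hF x''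
  obtain ⟨z', hz'⟩ := h (inclusionInDoubleDual ℂ (Dual ℂ A) a') x''
  have hx'' : ∀ G, x'' (biSmul A G a') = G z' := fun G ↦ DFunLike.congr_fun hz' G
  simp only [leftMulDual_eq_biSmul, hx'']
  exact hF z'

end Arens

theorem tripleDualMulIntoDual_of_surjective_derivation_general
    {A : Type*} [NonUnitalNormedRing A] [NormedSpace ℂ A]
    [IsScalarTower ℂ A A] [SMulCommClass ℂ A A] [CompleteSpace A]
    (D : A →L[ℂ] Dual ℂ A)
    (hsurj : Function.Surjective D)
    (hD'' : Arens.IsDerivationDD A (Arens.secondAdjoint D)) :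
    Arens.TripleDualMulIntoDual A ∧
      Arens.LWStarWCDualProp A ∧ Arens.RWStarWCDualProp A :=
  have h := Arens.tripleDualMulIntoDual_of_isDerivationDD hsurj hD''
  ⟨h, Arens.lWStarWCDualProp, Arens.rWStarWCDualProp_of_tripleDualMulIntoDual h⟩

/-- **Theorem 3-5 (1).** If `D : A → A*` is a surjective bounded derivation whose second
adjoint `D'' : A** → A***` is a derivation, then `A*** A** ⊆ A*`, and consequently `A*`
has the weak*-weak convergence property with respect to `A`: for every `x' ∈ A*` and every
net `(a_α) ⊆ A` converging weak* to `a'' ∈ A**`, the nets `x' a_α` and `a_α x'` converge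
weakly in `A*` to `x' a''` and `a'' x'` respectively. -/
theorem tripleDualMulIntoDual_of_surjective_derivation
    {A : Type*} [NonUnitalNormedRing A] [NormedSpace ℂ A]
    [IsScalarTower ℂ A A] [SMulCommClass ℂ A A] [CompleteSpace A]
    (D : A →L[ℂ] Dual ℂ A) (hD : Arens.IsDerivation A D)
    (hsurj : Function.Surjective D)
    (hD'' : Arens.IsDerivationDD A (Arens.secondAdjoint D)) :
    Arens.TripleDualMulIntoDual A ∧
      Arens.LWStarWCDualProp A ∧ Arens.RWStarWCDualProp A :=
  tripleDualMulIntoDual_of_surjective_derivation_general D hsurj hD''
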